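/- Let Γ be a finite simple graph. For a vertex v let A_{≥v} be the special subgroup generated by all vertices w with v ≤ w (in the standard order). Then every inversion, transvection, and extended partial conjugation of A_Γ maps A_{≥v} to a conjugate of A_{≥v}. In particular, for an extended partial conjugation π^x_K with x ∉ A_{≥v}, the automorphism π^x_K either fixes A_{≥v} pointwise or conjugates all of A_{≥v} by x. -/

import Mathlib

/-! Basic definitions: right-angled Artin groups, special subgroups,
relative automorphism notions, and graph-theoretic notions from
Day–Wade, "Relative automorphism groups of right-angled Artin groups". -/

namespace RAAGPaper

variable {V : Type}

open scoped commutatorElement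

/-- The commutator relations defining the RAAG on a simple graph. -/
def raagRels (G : SimpleGraph V) : Set (FreeGroup V) :=
  {r | ∃ v w : V, G.Adj v w ∧ r = ⁅FreeGroup.of v, FreeGroup.of w⁆}

/-- The right-angled Artin group on the graph `G`. -/
abbrev RAAG (G : SimpleGraph V) : Type := PresentedGroup (raagRels G)

/-- The generator of `RAAG G` corresponding to a vertex. -/
def gen (G : SimpleGraph V) (v : V) : RAAG G := PresentedGroup.of v

/-- The special subgroup `A_Δ` generated by the vertices of a (full) subgraph `Δ`. -/
def sp (G : SimpleGraph V) (Δ : Set V) : Subgroup (RAAG G) :=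
  Subgroup.closure (gen G '' Δ)

/-- The link of a vertex. -/
def lk (G : SimpleGraph V) (v : V) : Set V := {w | G.Adj v w}

/-- The star of a vertex. -/
def st (G : SimpleGraph V) (v : V) : Set V := insert v (lk G v)

/-- The standard (domination) order: `u ≤ v` iff `lk(u) ⊆ st(v)`. -/
def stdLE (G : SimpleGraph V) (u v : V) : Prop := lk G u ⊆ st G v

/-- An automorphism acts trivially on a subgroup if it agrees with an inner
automorphism on that subgroup. -/
def ActsTrivially {A : Type*} [Group A] (φ : MulAut A) (H : Subgroup A) : Prop :=
  ∃ g : A, ∀ h ∈ H, φ h = g * h * g⁻¹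

/-- An automorphism preserves a subgroup if it sends it to a conjugate of itself. -/
def Preserves {A : Type*} [Group A] (φ : MulAut A) (H : Subgroup A) : Prop :=
  ∃ g : A, Subgroup.map φ.toMonoidHom H = Subgroup.map (MulAut.conj g).toMonoidHom H

/-- `𝒢`-adjacency: adjacent in `G` or contained in a common member of `𝒢`. -/
def gAdj (G : SimpleGraph V) (calG : Set (Set V)) (u w : V) : Prop :=
  G.Adj u w ∨ ∃ Δ ∈ calG, u ∈ Δ ∧ w ∈ Δ

/-- `𝒢`-reachability within a set `S` of vertices. -/
def gReach (G : SimpleGraph V) (calG : Set (Set V)) (S : Set V) : V → V → Prop :=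
  Relation.ReflTransGen (fun a b => a ∈ S ∧ b ∈ S ∧ gAdj G calG a b)

/-- `K` is a union of `𝒢`-components of (the full subgraph on) `S`.
With `calG = ∅` this says `K` is a union of connected components of `S`. -/
def UnionOfComps (G : SimpleGraph V) (calG : Set (Set V)) (S K : Set V) : Prop :=
  K ⊆ S ∧ ∀ u ∈ K, ∀ w, gReach G calG S u w → w ∈ K

/-- The members of `𝒢` not containing the vertex `x`. -/
def calGx (calG : Set (Set V)) (x : V) : Set (Set V) := {Δ ∈ calG | x ∉ Δ}

/-- The `𝒢`-order: `u ≤_𝒢 v` iff `u ≤ v` in the standard order and every member of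
`𝒢` containing `u` also contains `v`. -/
def gLE (G : SimpleGraph V) (calG : Set (Set V)) (u v : V) : Prop :=
  stdLE G u v ∧ ∀ Δ ∈ calG, u ∈ Δ → v ∈ Δ

/-- `Δ` meets at most one `𝒢^x`-component of `Γ - st(x)`. -/
def MeetsAtMostOne (G : SimpleGraph V) (calG : Set (Set V)) (x : V) (Δ : Set V) : Prop :=
  ∀ u w, u ∈ Δ → w ∈ Δ → u ∈ (st G x)ᶜ → w ∈ (st G x)ᶜ →
    gReach G (calGx calG x) ((st G x)ᶜ) u w

/-- `Δ` is upwards closed under the `𝒢`-order. -/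
def UpClosed (G : SimpleGraph V) (calG : Set (Set V)) (Δ : Set V) : Prop :=
  ∀ v ∈ Δ, ∀ w, gLE G calG v w → w ∈ Δ

/-- `Δ` is not `𝒢`-star-separated by any outside vertex. -/
def NotStarSep (G : SimpleGraph V) (calG : Set (Set V)) (Δ : Set V) : Prop :=
  ∀ x, x ∉ Δ → MeetsAtMostOne G calG x Δ

/-- All members of `calG` are proper (special) subgroups. -/
def Proper (calG : Set (Set V)) : Prop := ∀ Δ ∈ calG, Δ ≠ Set.univ

/-- Word length of an element of the RAAG with respect to the standard generators. -/
noncomputable def wordLength (G : SimpleGraph V) (g : RAAG G) : ℕ :=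
  sInf {n | ∃ l : List (V × Bool), PresentedGroup.mk (raagRels G) (FreeGroup.mk l) = g ∧
    l.length = n}

/-- An element is cyclically reduced if it has minimal word length in its
conjugacy class. -/
noncomputable def CycRed (G : SimpleGraph V) (g : RAAG G) : Prop :=
  ∀ h : RAAG G, wordLength G g ≤ wordLength G (h * g * h⁻¹)

/-- The link of `v` computed inside the full subgraph `Δ`. -/
def lkIn (G : SimpleGraph V) (Δ : Set V) (v : V) : Set V := {w ∈ Δ | G.Adj v w}

/-- The star of `v` computed inside the full subgraph `Δ`. -/
def stIn (G : SimpleGraph V) (Δ : Set V) (v : V) : Set V := insert v (lkIn G Δ v)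

/-- Domination computed inside the full subgraph `Δ`. -/
def leIn (G : SimpleGraph V) (Δ : Set V) (u v : V) : Prop :=
  lkIn G Δ u ⊆ stIn G Δ v

/-- The induced peripheral structure `𝒢_Δ`: proper intersections of members of `𝒢`
with `Δ`. -/
def inducedG (calG : Set (Set V)) (Δ : Set V) : Set (Set V) :=
  {Θ | ∃ Λ ∈ calG, Θ = Δ ∩ Λ ∧ Δ ∩ Λ ≠ Δ}

/-- `𝒢` is saturated: it contains every proper special subgroup invariant under
`Out⁰(A_Γ; 𝒢)`, where invariance is characterized by being upwards closed under
`≤_𝒢` and not `𝒢`-star-separated by an outside vertex. -/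
def Saturated (G : SimpleGraph V) (calG : Set (Set V)) : Prop :=
  ∀ Δ : Set V, Δ ≠ Set.univ → UpClosed G calG Δ → NotStarSep G calG Δ → Δ ∈ calG

/-- `φ` is an inversion automorphism. -/
def IsInversion (G : SimpleGraph V) (φ : MulAut (RAAG G)) : Prop :=
  ∃ v, φ (gen G v) = (gen G v)⁻¹ ∧ ∀ w, w ≠ v → φ (gen G w) = gen G w

/-- `φ` is a transvection. -/
def IsTransvection (G : SimpleGraph V) (φ : MulAut (RAAG G)) : Prop :=
  ∃ v w, v ≠ w ∧ stdLE G v w ∧ φ (gen G v) = gen G v * gen G w ∧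
    ∀ u, u ≠ v → φ (gen G u) = gen G u

/-- `φ` is an extended partial conjugation. -/
def IsEPC (G : SimpleGraph V) (φ : MulAut (RAAG G)) : Prop :=
  ∃ x K, UnionOfComps G ∅ ((st G x)ᶜ) K ∧
    (∀ w ∈ K, φ (gen G w) = gen G x * gen G w * (gen G x)⁻¹) ∧
    ∀ w ∉ K, φ (gen G w) = gen G w

/-- The subgroup `Aut⁰(A_Γ)` generated by inversions, transvections and extended
partial conjugations. -/
def Aut0 (G : SimpleGraph V) : Subgroup (MulAut (RAAG G)) :=
  Subgroup.closure {φ | IsInversion G φ ∨ IsTransvection G φ ∨ IsEPC G φ}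

/-!
Inversions, transvections `ρ^z_u` with `u ≤ z`, and partial conjugations by an `x ≥ v` map
the generators of `A_{≥v}` into `A_{≥v}` and can be undone inside it, since `≤` is transitive.
For a partial conjugation `π^x_K` with `v ≰ x`, a vertex `u ∈ lk(v) - st(x)` is equal or
adjacent to every `w ≥ v`, so all generators of `A_{≥v}` outside `st(x)` lie in a single
component of `Γ - st(x)`: either it is in `K` and `π^x_K` conjugates all of `A_{≥v}` by `x`
(which commutes with `st(x)`), or it is not and `π^x_K` fixes `A_{≥v}`.
-/

section Preserves

variable {A : Type*} [Group A]

theorem preserves_of_map_eq_self {φ : MulAut A} {H : Subgroup A}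
    (h : H.map φ.toMonoidHom = H) : Preserves φ H :=
  ⟨1, by rw [h]; ext; simp⟩

theorem preserves_of_eqOn_conj {φ : MulAut A} {H : Subgroup A} {g : A}
    (h : ∀ a ∈ H, φ a = g * a * g⁻¹) : Preserves φ H :=
  ⟨g, SetLike.coe_injective <| by
    simp only [Subgroup.coe_map]
    exact Set.EqOn.image_eq fun a ha => by simpa [MulAut.conj_apply] using h a ha⟩

end Preserves

section Graph

variable {G : SimpleGraph V}

theorem stdLE_trans {a b c : V} (hab : stdLE G a b) (hbc : stdLE G b c) : stdLE G a c := by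
  intro y hy
  rcases hab hy with rfl | hby
  · rcases hbc (G.adj_symm hy) with rfl | hac
    · exact Or.inr hy
    · rcases hab (G.adj_symm hac) with rfl | hbc_adj
      · exact Set.mem_insert _ _
      · exact Or.inr (G.adj_symm hbc_adj)
  · exact hbc hby

theorem calGx_empty (x : V) : calGx (∅ : Set (Set V)) x = ∅ :=
  Set.sep_empty _

theorem meetsAtMostOne_geq {v x : V} (hvx : ¬ stdLE G v x) :
    MeetsAtMostOne G ∅ x {w | stdLE G v w} := by
  obtain ⟨u, hvu, hux⟩ := Set.not_subset.mp hvx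
  have eq_or_adj : ∀ w, stdLE G v w → u = w ∨ G.Adj u w := fun w hw =>
    (Set.mem_insert_iff.mp (hw hvu)).imp id G.adj_symm
  intro w₁ w₂ hw₁ hw₂ hw₁x hw₂x
  rw [calGx_empty]
  have to_u : gReach G ∅ (st G x)ᶜ w₁ u := by
    rcases eq_or_adj w₁ hw₁ with rfl | h
    · exact .refl
    · exact .single ⟨hw₁x, hux, Or.inl (G.adj_symm h)⟩
  have from_u : gReach G ∅ (st G x)ᶜ u w₂ := by
    rcases eq_or_adj w₂ hw₂ with rfl | h
    · exact .refl
    · exact .single ⟨hux, hw₂x, Or.inl h⟩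
  exact to_u.trans from_u

end Graph

section Generators

variable {G : SimpleGraph V}

theorem gen_mem_sp {Δ : Set V} {w : V} (hw : w ∈ Δ) : gen G w ∈ sp G Δ :=
  Subgroup.subset_closure ⟨w, hw, rfl⟩

theorem gen_commute_of_mem_st {x w : V} (hw : w ∈ st G x) : Commute (gen G x) (gen G w) := by
  rcases hw with rfl | hxw
  · exact Commute.refl _
  · have hrel : ⁅FreeGroup.of x, FreeGroup.of w⁆ ∈ raagRels G := ⟨x, w, hxw, rfl⟩
    have h : PresentedGroup.mk (raagRels G) ⁅FreeGroup.of x, FreeGroup.of w⁆ = 1 :=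
      (QuotientGroup.eq_one_iff _).mpr (Subgroup.subset_normalClosure hrel)
    rw [map_commutatorElement] at h
    exact commutatorElement_eq_one_iff_mul_comm.mp h

theorem eqOn_sp_of_eqOn_gen {φ : MulAut (RAAG G)} {Δ : Set V} {g : RAAG G}
    (h : ∀ w ∈ Δ, φ (gen G w) = g * gen G w * g⁻¹) :
    ∀ a ∈ sp G Δ, φ a = g * a * g⁻¹ := fun a ha =>
  MonoidHom.eqOn_closure (f := φ.toMonoidHom) (g := (MulAut.conj g).toMonoidHom)
    (by rintro _ ⟨w, hw, rfl⟩; exact h w hw) ha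

theorem map_sp_eq_self {φ : MulAut (RAAG G)} {Δ : Set V}
    (hto : ∀ w ∈ Δ, φ (gen G w) ∈ sp G Δ)
    (hfrom : ∀ w ∈ Δ, ∃ a ∈ sp G Δ, φ a = gen G w) :
    (sp G Δ).map φ.toMonoidHom = sp G Δ := by
  apply le_antisymm
  · rw [sp, MonoidHom.map_closure, Subgroup.closure_le]
    rintro _ ⟨_, ⟨w, hw, rfl⟩, rfl⟩
    exact hto w hw
  · rw [sp, Subgroup.closure_le]
    rintro _ ⟨w, hw, rfl⟩
    exact hfrom w hw

end Generators

section Automorphisms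

variable {G : SimpleGraph V}

theorem map_sp_eq_self_of_inversion {ι : MulAut (RAAG G)} {u : V}
    (hu : ι (gen G u) = (gen G u)⁻¹) (hfix : ∀ w, w ≠ u → ι (gen G w) = gen G w)
    (Δ : Set V) : (sp G Δ).map ι.toMonoidHom = sp G Δ := by
  apply map_sp_eq_self
  · intro w hw
    obtain rfl | hwu := eq_or_ne w u
    · rw [hu]; exact inv_mem (gen_mem_sp hw)
    · rw [hfix w hwu]; exact gen_mem_sp hw
  · intro w hw
    obtain rfl | hwu := eq_or_ne w u
    · exact ⟨(gen G w)⁻¹, inv_mem (gen_mem_sp hw), by rw [map_inv, hu, inv_inv]⟩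
    · exact ⟨gen G w, gen_mem_sp hw, hfix w hwu⟩

theorem map_sp_eq_self_of_transvection {ρ : MulAut (RAAG G)} {u z : V} {Δ : Set V}
    (huz : u ≠ z) (hΔ : u ∈ Δ → z ∈ Δ) (hu : ρ (gen G u) = gen G u * gen G z)
    (hfix : ∀ y, y ≠ u → ρ (gen G y) = gen G y) :
    (sp G Δ).map ρ.toMonoidHom = sp G Δ := by
  apply map_sp_eq_self
  · intro w hw
    obtain rfl | hwu := eq_or_ne w u
    · rw [hu]; exact mul_mem (gen_mem_sp hw) (gen_mem_sp (hΔ hw))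
    · rw [hfix w hwu]; exact gen_mem_sp hw
  · intro w hw
    obtain rfl | hwu := eq_or_ne w u
    · refine ⟨gen G w * (gen G z)⁻¹, mul_mem (gen_mem_sp hw) (inv_mem (gen_mem_sp (hΔ hw))), ?_⟩
      rw [map_mul, map_inv, hu, hfix z huz.symm, mul_inv_cancel_right]
    · exact ⟨gen G w, gen_mem_sp hw, hfix w hwu⟩

theorem map_sp_eq_self_of_partialConj {π : MulAut (RAAG G)} {x : V} {K Δ : Set V}
    (hxΔ : x ∈ Δ) (hxK : x ∉ K)
    (hπK : ∀ w ∈ K, π (gen G w) = gen G x * gen G w * (gen G x)⁻¹)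
    (hπnK : ∀ w ∉ K, π (gen G w) = gen G w) :
    (sp G Δ).map π.toMonoidHom = sp G Δ := by
  have hx := gen_mem_sp (G := G) hxΔ
  apply map_sp_eq_self
  · intro w hw
    by_cases hwK : w ∈ K
    · rw [hπK w hwK]; exact mul_mem (mul_mem hx (gen_mem_sp hw)) (inv_mem hx)
    · rw [hπnK w hwK]; exact gen_mem_sp hw
  · intro w hw
    by_cases hwK : w ∈ K
    · refine ⟨(gen G x)⁻¹ * gen G w * gen G x,
        mul_mem (mul_mem (inv_mem hx) (gen_mem_sp hw)) hx, ?_⟩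
      rw [map_mul, map_mul, map_inv, hπnK x hxK, hπK w hwK]
      group
    · exact ⟨gen G w, gen_mem_sp hw, hπnK w hwK⟩

theorem eqOn_sp_id_or_conj_of_meetsAtMostOne {π : MulAut (RAAG G)} {x : V} {K Δ : Set V}
    (hK : UnionOfComps G ∅ (st G x)ᶜ K) (hΔ : MeetsAtMostOne G ∅ x Δ)
    (hπK : ∀ w ∈ K, π (gen G w) = gen G x * gen G w * (gen G x)⁻¹)
    (hπnK : ∀ w ∉ K, π (gen G w) = gen G w) :
    (∀ a ∈ sp G Δ, π a = a) ∨ (∀ a ∈ sp G Δ, π a = gen G x * a * (gen G x)⁻¹) := by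
  by_cases hmeet : ∃ w₀ ∈ Δ, w₀ ∈ K
  · obtain ⟨w₀, hw₀Δ, hw₀K⟩ := hmeet
    refine Or.inr (eqOn_sp_of_eqOn_gen fun w hw => ?_)
    by_cases hwx : w ∈ st G x
    · rw [hπnK w fun hwK => hK.1 hwK hwx, (gen_commute_of_mem_st hwx).eq, mul_inv_cancel_right]
    · have hreach := hΔ w₀ w hw₀Δ hw (hK.1 hw₀K) hwx
      rw [calGx_empty] at hreach
      exact hπK w (hK.2 w₀ hw₀K w hreach)
  · push Not at hmeet
    left
    intro a ha
    simpa using eqOn_sp_of_eqOn_gen (g := 1) (fun w hw => by simpa using hπnK w (hmeet w hw)) a ha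

end Automorphisms

theorem Ageq_invariant_general (G : SimpleGraph V) (v : V) :
    (∀ (u : V) (ι : MulAut (RAAG G)), ι (gen G u) = (gen G u)⁻¹ →
        (∀ w, w ≠ u → ι (gen G w) = gen G w) →
        Preserves ι (sp G {w | stdLE G v w})) ∧
    (∀ (u z : V), u ≠ z → stdLE G u z → ∀ ρ : MulAut (RAAG G),
        ρ (gen G u) = gen G u * gen G z →
        (∀ y, y ≠ u → ρ (gen G y) = gen G y) →
        Preserves ρ (sp G {w | stdLE G v w})) ∧
    (∀ (x : V) (K : Set V), UnionOfComps G ∅ ((st G x)ᶜ) K →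
        ∀ π : MulAut (RAAG G),
          (∀ w ∈ K, π (gen G w) = gen G x * gen G w * (gen G x)⁻¹) →
          (∀ w ∉ K, π (gen G w) = gen G w) →
          Preserves π (sp G {w | stdLE G v w}) ∧
            (gen G x ∉ sp G {w | stdLE G v w} →
              ((∀ h ∈ sp G {w | stdLE G v w}, π h = h) ∨
                (∀ h ∈ sp G {w | stdLE G v w},
                  π h = gen G x * h * (gen G x)⁻¹)))) := by
  refine ⟨fun u ι hu hfix => preserves_of_map_eq_self (map_sp_eq_self_of_inversion hu hfix _),
    fun u z huz huz_le ρ hu hfix => preserves_of_map_eq_self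
      (map_sp_eq_self_of_transvection huz (fun hvu => stdLE_trans hvu huz_le) hu hfix),
    fun x K hK π hπK hπnK => ?_⟩
  have dichotomy (hvx : ¬ stdLE G v x) :=
    eqOn_sp_id_or_conj_of_meetsAtMostOne hK (meetsAtMostOne_geq hvx) hπK hπnK
  refine ⟨?_, fun hx => dichotomy fun hvx => hx (gen_mem_sp hvx)⟩
  by_cases hvx : stdLE G v x
  · have hxK : x ∉ K := fun hxK => hK.1 hxK (Set.mem_insert x _)
    exact preserves_of_map_eq_self (map_sp_eq_self_of_partialConj hvx hxK hπK hπnK)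
  · rcases dichotomy hvx with hfix | hconj
    · exact preserves_of_eqOn_conj (g := 1) fun a ha => by simpa using hfix a ha
    · exact preserves_of_eqOn_conj hconj

/-- Every inversion, transvection, and extended partial
conjugation sends `A_{≥v}` to a conjugate of itself; moreover an extended partial
conjugation `π^x_K` with `x ∉ A_{≥v}` either fixes `A_{≥v}` pointwise or
conjugates all of it by `x`. -/
theorem Ageq_invariant [Fintype V] (G : SimpleGraph V) (v : V) :
    (∀ (u : V) (ι : MulAut (RAAG G)), ι (gen G u) = (gen G u)⁻¹ →
        (∀ w, w ≠ u → ι (gen G w) = gen G w) →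
        Preserves ι (sp G {w | stdLE G v w})) ∧
    (∀ (u z : V), u ≠ z → stdLE G u z → ∀ ρ : MulAut (RAAG G),
        ρ (gen G u) = gen G u * gen G z →
        (∀ y, y ≠ u → ρ (gen G y) = gen G y) →
        Preserves ρ (sp G {w | stdLE G v w})) ∧
    (∀ (x : V) (K : Set V), UnionOfComps G ∅ ((st G x)ᶜ) K →
        ∀ π : MulAut (RAAG G),
          (∀ w ∈ K, π (gen G w) = gen G x * gen G w * (gen G x)⁻¹) →
          (∀ w ∉ K, π (gen G w) = gen G w) →
          Preserves π (sp G {w | stdLE G v w}) ∧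
            (gen G x ∉ sp G {w | stdLE G v w} →
              ((∀ h ∈ sp G {w | stdLE G v w}, π h = h) ∨
                (∀ h ∈ sp G {w | stdLE G v w},
                  π h = gen G x * h * (gen G x)⁻¹)))) :=
  Ageq_invariant_general G v

end RAAGPaper
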